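/- arXiv:2604.04026 — 5 statements merged into one kernel-verified Lean document; each statement's English description precedes it below -/
import Mathlib

section
/- Fix E_min ≤ E_max, and let d₁, d₂ ∈ [E_min, E_max], k > 0. Then E(λ) = (1-λ)d₁ + λd₂ + λ(1-λ)k satisfies E_min ≤ E(λ) ≤ E_max for all λ ∈ [0,1] if and only if k ≤ (√(E_max - d₁) + √(E_max - d₂))². -/
theorem ascending_edge_bound_aux
    (Emin Emax d₁ d₂ sa sb k : ℝ) (hE : Emin ≤ Emax)
    (hsa0 : 0 ≤ sa) (hsb0 : 0 ≤ sb)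
    (ha : sa ^ 2 = Emax - d₁) (hb : sb ^ 2 = Emax - d₂)
    (h1 : Emin ≤ d₁) (h3 : Emin ≤ d₂) (hk : 0 < k) :
    (∀ lam ∈ Set.Icc (0 : ℝ) 1,
        (1 - lam) * d₁ + lam * d₂ + lam * (1 - lam) * k ∈ Set.Icc Emin Emax)
      ↔ k ≤ (sa + sb) ^ 2 := by
  have hd1' : d₁ = Emax - sa ^ 2 := by linarith
  have hd2' : d₂ = Emax - sb ^ 2 := by linarith
  subst hd1' hd2'
  constructor
  · intro h
    by_contra hcon
    push_neg at hcon
    have hab : (sa - sb) ^ 2 < k := by nlinarith [mul_nonneg hsa0 hsb0]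
    set lam := (k + sa ^ 2 - sb ^ 2) / (2 * k) with hlam
    have hmem : lam ∈ Set.Icc (0 : ℝ) 1 := by
      constructor
      · apply div_nonneg _ (by linarith)
        nlinarith [mul_nonneg hsb0 (add_nonneg hsa0 hsb0)]
      · rw [div_le_one (by linarith)]
        nlinarith [mul_nonneg hsa0 (add_nonneg hsa0 hsb0)]
    have hub := (h lam hmem).2
    have hf : 0 ≤ (1 - lam) * sa ^ 2 + lam * sb ^ 2 - lam * (1 - lam) * k := by
      nlinarith [hub]
    have e : lam * (2 * k) = k + sa ^ 2 - sb ^ 2 := by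
      rw [hlam, div_mul_cancel₀ _ (by positivity)]
    nlinarith [mul_pos (sub_pos.mpr hcon) (sub_pos.mpr hab),
      mul_nonneg hf (by positivity : (0:ℝ) ≤ 4 * k ^ 2),
      sq_nonneg (lam * (2 * k) - (k + sa ^ 2 - sb ^ 2)), e,
      mul_nonneg hf hk.le]
  · intro hle lam hmem
    obtain ⟨hl0, hl1⟩ := hmem
    have hl1' : (0:ℝ) ≤ 1 - lam := by linarith
    constructor
    · nlinarith [mul_nonneg (mul_nonneg hl0 hl1') hk.le,
        mul_nonneg hl1' (by linarith : (0:ℝ) ≤ Emax - sa ^ 2 - Emin),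
        mul_nonneg hl0 (by linarith : (0:ℝ) ≤ Emax - sb ^ 2 - Emin)]
    · nlinarith [sq_nonneg ((1 - lam) * sa - lam * sb),
        mul_nonneg (mul_nonneg hl0 hl1') (by linarith : (0:ℝ) ≤ (sa + sb) ^ 2 - k)]

theorem ascending_edge_bound
    (Emin Emax d₁ d₂ k : ℝ) (hE : Emin ≤ Emax)
    (hd₁ : d₁ ∈ Set.Icc Emin Emax) (hd₂ : d₂ ∈ Set.Icc Emin Emax)
    (hk : 0 < k) :
    (∀ lam ∈ Set.Icc (0 : ℝ) 1,
        (1 - lam) * d₁ + lam * d₂ + lam * (1 - lam) * k ∈ Set.Icc Emin Emax)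
      ↔ k ≤ (Real.sqrt (Emax - d₁) + Real.sqrt (Emax - d₂)) ^ 2 := by
  exact ascending_edge_bound_aux Emin Emax d₁ d₂ _ _ k hE
    (Real.sqrt_nonneg _) (Real.sqrt_nonneg _)
    (Real.sq_sqrt (by linarith [hd₁.2])) (Real.sq_sqrt (by linarith [hd₂.2]))
    hd₁.1 hd₂.1 hk
end

section
/- Fix E_min ≤ E_max, and let d₁, d₂ ∈ [E_min, E_max], k < 0. Then E(λ) = (1-λ)d₁ + λd₂ + λ(1-λ)k satisfies E_min ≤ E(λ) ≤ E_max for all λ ∈ [0,1] if and only if -k ≤ (√(d₁ - E_min) + √(d₂ - E_min))². -/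
theorem descending_edge_bound
    (Emin Emax d₁ d₂ k : ℝ) (hE : Emin ≤ Emax)
    (hd₁ : d₁ ∈ Set.Icc Emin Emax) (hd₂ : d₂ ∈ Set.Icc Emin Emax)
    (hk : k < 0) :
    (∀ lam ∈ Set.Icc (0 : ℝ) 1,
        (1 - lam) * d₁ + lam * d₂ + lam * (1 - lam) * k ∈ Set.Icc Emin Emax)
      ↔ -k ≤ (Real.sqrt (d₁ - Emin) + Real.sqrt (d₂ - Emin)) ^ 2 := by
  obtain ⟨h1, h2⟩ := hd₁
  obtain ⟨h3, h4⟩ := hd₂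
  set sa := Real.sqrt (d₁ - Emin) with hsadef
  set sb := Real.sqrt (d₂ - Emin) with hsbdef
  have hsa : sa ^ 2 = d₁ - Emin := Real.sq_sqrt (by linarith)
  have hsb : sb ^ 2 = d₂ - Emin := Real.sq_sqrt (by linarith)
  have hsa0 : 0 ≤ sa := Real.sqrt_nonneg _
  have hsb0 : 0 ≤ sb := Real.sqrt_nonneg _
  have hk' : (0:ℝ) < -k := by linarith
  constructor
  · intro h
    by_contra hc
    push_neg at hc
    set lam := (sa ^ 2 - sb ^ 2 + (-k)) / (2 * (-k)) with hlamdef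
    have hnum0 : 0 ≤ sa ^ 2 - sb ^ 2 + (-k) := by nlinarith [mul_nonneg hsa0 hsb0]
    have hnum1 : sa ^ 2 - sb ^ 2 + (-k) ≤ 2 * (-k) := by nlinarith [mul_nonneg hsa0 hsb0]
    have hlam0 : 0 ≤ lam := div_nonneg hnum0 (by linarith)
    have hlam1 : lam ≤ 1 := by
      rw [hlamdef, div_le_one (by linarith)]
      exact hnum1
    have hl : 2 * (-k) * lam = sa ^ 2 - sb ^ 2 + (-k) := by
      rw [hlamdef]; field_simp; ring_nf; field_simp [hk.ne]; ring
    have := (h lam ⟨hlam0, hlam1⟩).1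
    -- key: (a - b + c)^2 > 4 a c  since c > (sa+sb)^2 ≥ (sa-sb)^2
    have key : 4 * (sa ^ 2) * (-k) < (sa ^ 2 - sb ^ 2 + (-k)) ^ 2 := by
      nlinarith [mul_nonneg hsa0 hsb0, sq_nonneg (sa - sb), sq_nonneg (sa + sb),
        mul_pos (show (0:ℝ) < -k - (sa+sb)^2 by linarith)
          (show (0:ℝ) < -k - (sa-sb)^2 by nlinarith [mul_nonneg hsa0 hsb0])]
    nlinarith [sq_nonneg (2 * (-k) * lam - (sa ^ 2 - sb ^ 2 + (-k))), hl, key, hk',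
      mul_pos hk' hk']
  · intro h lam hlam
    obtain ⟨hl0, hl1⟩ := hlam
    constructor
    · nlinarith [sq_nonneg ((1 - lam) * sa - lam * sb),
        mul_nonneg (mul_nonneg hl0 (by linarith : (0:ℝ) ≤ 1 - lam))
          (by linarith : (0:ℝ) ≤ (sa + sb) ^ 2 + k)]
    · nlinarith [mul_nonneg hl0 (show (0:ℝ) ≤ Emax - d₂ by linarith),
        mul_nonneg (show (0:ℝ) ≤ 1 - lam by linarith) (show (0:ℝ) ≤ Emax - d₁ by linarith),
        mul_nonneg (mul_nonneg hl0 (show (0:ℝ) ≤ 1 - lam by linarith)) (le_of_lt hk')]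
end

section
/- Let k₁, k₂ > 0 and k₃ ∈ ℝ satisfy (k₁ + k₂ - k₃)² - 4k₁k₂ > 0. Then there exist points v₂ = (x₂,y₂), v₃ = (x₃,y₃) ∈ ℝ² such that x₂y₂ = k₁, x₃y₃ = k₂, (x₃-x₂)(y₃-y₂) = k₃, and the triangle (0,0), v₂, v₃ is non-degenerate (x₃y₂ - x₂y₃ ≠ 0). -/
theorem edge_products_realizable
    (k₁ k₂ k₃ : ℝ) (h₁ : 0 < k₁) (h₂ : 0 < k₂)
    (hdisc : 0 < (k₁ + k₂ - k₃) ^ 2 - 4 * k₁ * k₂) :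
    ∃ x₂ y₂ x₃ y₃ : ℝ,
      x₂ * y₂ = k₁ ∧ x₃ * y₃ = k₂ ∧ (x₃ - x₂) * (y₃ - y₂) = k₃ ∧
      x₃ * y₂ - x₂ * y₃ ≠ 0 := by
  set b := k₁ + k₂ - k₃ with hb
  set d := Real.sqrt (b ^ 2 - 4 * k₁ * k₂) with hdd
  have hd2 : d ^ 2 = b ^ 2 - 4 * k₁ * k₂ := Real.sq_sqrt hdisc.le
  have hdpos : 0 < d := Real.sqrt_pos.mpr hdisc
  have hbd : b + d ≠ 0 := by
    intro h
    have : d = -b := by linarith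
    nlinarith [hd2, this, mul_pos h₁ h₂]
  set s := (b + d) / (2 * k₁) with hs
  have hs0 : s ≠ 0 := by
    simp only [hs, div_ne_zero_iff]
    exact ⟨hbd, by positivity⟩
  have hquad : k₁ * s ^ 2 - b * s + k₂ = 0 := by
    rw [hs]
    field_simp
    nlinarith [hd2]
  refine ⟨1, k₁, s, k₂ / s, by ring, by field_simp, ?_, ?_⟩
  · field_simp
    linear_combination -hquad - s * hb
  · intro h
    have h' : s * k₁ * s - k₂ = 0 := by
      field_simp at h
      linarith [h]
    -- k₁ s² = k₂ and k₁ s² = b s - k₂ ⟹ b s = 2 k₂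
    have hbs : b * s = 2 * k₂ := by nlinarith [hquad, h']
    -- b s = (b² + b d)/(2k₁) = (d² + 4k₁k₂ + b d)/(2k₁)
    have : b * (b + d) = 2 * k₂ * (2 * k₁) := by
      rw [hs] at hbs
      field_simp at hbs
      linarith [hbs]
    have hdb : d * (d + b) = 0 := by linear_combination hd2 + this
    rcases mul_eq_zero.mp hdb with h1 | h1
    · exact hdpos.ne' h1
    · exact hbd (by linarith)
end

section
/- Let σ > 0, fix a₁ ≥ 0 and ā ∈ (0, √σ). For H with 0 ≤ H ≤ √σ - ā, set a₂ = ā + H, a₃ = ā - H, b_i = √(σ - a_i²), C = (a₁ + ā)², S = σ - ā², h = H², Q = (b₂ + b₃)², and G(h) = 16Ch + Q(Q + 4C + 4h). Then Q = 2(S - h) + 2√((S-h)² - 4ā²h), and for h > 0 one has Q < 4(S - h) and G(h) < G(0) = 16S(S + C). In particular the expression (P₁₂ - P₁₃)² + Q(Q + 2P₁₂ + 2P₁₃) with P₁₂ = (a₁+a₂)², P₁₃ = (a₁+a₃)² is strictly maximized over {a₂ + a₃ = 2ā} at a₂ = a₃ = ā. -/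
private lemma aux_sq (t abar H : ℝ) (h0 : 0 < abar) (h1 : abar < t)
    (hH : 0 ≤ H) (hH' : H ≤ t - abar) : abar ^ 2 + H ^ 2 < t ^ 2 := by
  nlinarith [mul_le_mul hH' hH' hH (by linarith : (0:ℝ) ≤ t - abar),
    mul_pos h0 (show (0:ℝ) < t - abar by linarith)]

private lemma aux_lt (p d : ℝ) (hp : 0 ≤ p) (hd : 0 < d) (h : p ^ 2 < d ^ 2) :
    p < d := by nlinarith

private lemma aux_main (C S h Q : ℝ) (hC : 0 ≤ C) (hQ : 0 ≤ Q) (hh : 0 < h)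
    (hSh : 0 < S - h) (hq : Q < 4 * (S - h)) :
    16 * C * h + Q * (Q + 4 * C + 4 * h) < 16 * S * (S + C) := by
  nlinarith [mul_pos (show (0:ℝ) < 4 * (S - h) - Q by linarith)
      (show (0:ℝ) < Q + 4 * C + 4 * h by linarith),
    mul_pos (show (0:ℝ) < S by linarith) hh, mul_nonneg hC hh.le]

theorem symmetry_step
    (σ a₁ abar H : ℝ) (hσ : 0 < σ) (ha₁ : 0 ≤ a₁)
    (habar : abar ∈ Set.Ioo 0 (Real.sqrt σ))
    (hH : 0 ≤ H) (hH' : H ≤ Real.sqrt σ - abar)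
    (a₂ a₃ b₂ b₃ C S h Q P₁₂ P₁₃ : ℝ)
    (ha₂ : a₂ = abar + H) (ha₃ : a₃ = abar - H)
    (hb₂ : b₂ = Real.sqrt (σ - a₂ ^ 2)) (hb₃ : b₃ = Real.sqrt (σ - a₃ ^ 2))
    (hC : C = (a₁ + abar) ^ 2) (hS : S = σ - abar ^ 2) (hh : h = H ^ 2)
    (hQ : Q = (b₂ + b₃) ^ 2)
    (hP₁₂ : P₁₂ = (a₁ + a₂) ^ 2) (hP₁₃ : P₁₃ = (a₁ + a₃) ^ 2) :
    Q = 2 * (S - h) + 2 * Real.sqrt ((S - h) ^ 2 - 4 * abar ^ 2 * h) ∧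
    (0 < h → Q < 4 * (S - h)) ∧
    (0 < h →
      16 * C * h + Q * (Q + 4 * C + 4 * h) < 16 * S * (S + C)) ∧
    (0 < h →
      (P₁₂ - P₁₃) ^ 2 + Q * (Q + 2 * P₁₂ + 2 * P₁₃) < 16 * S * (S + C)) := by
  obtain ⟨habar0, habar1⟩ := habar
  have hts : Real.sqrt σ ^ 2 = σ := Real.sq_sqrt hσ.le
  have ht0 : 0 < Real.sqrt σ := Real.sqrt_pos.mpr hσ
  have h2nn : 0 ≤ σ - a₂ ^ 2 := by
    have h1 : a₂ ≤ Real.sqrt σ := by rw [ha₂]; linarith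
    have h2 : 0 ≤ a₂ := by rw [ha₂]; linarith
    nlinarith [mul_le_mul h1 h1 h2 ht0.le]
  have h3nn : 0 ≤ σ - a₃ ^ 2 := by
    have h1 : a₃ ≤ Real.sqrt σ := by rw [ha₃]; linarith
    have h2 : -Real.sqrt σ ≤ a₃ := by rw [ha₃]; linarith
    nlinarith [mul_self_le_mul_self (abs_nonneg a₃)
      (abs_le.mpr ⟨h2, h1⟩), sq_abs a₃]
  have hb₂nn : 0 ≤ b₂ := hb₂ ▸ Real.sqrt_nonneg _
  have hb₃nn : 0 ≤ b₃ := hb₃ ▸ Real.sqrt_nonneg _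
  have hb₂sq : b₂ ^ 2 = σ - a₂ ^ 2 := by rw [hb₂]; exact Real.sq_sqrt h2nn
  have hb₃sq : b₃ ^ 2 = σ - a₃ ^ 2 := by rw [hb₃]; exact Real.sq_sqrt h3nn
  have hsum : b₂ ^ 2 + b₃ ^ 2 = 2 * (S - h) := by
    rw [hb₂sq, hb₃sq, hS, hh, ha₂, ha₃]; ring
  have hprodsq : (b₂ * b₃) ^ 2 = (S - h) ^ 2 - 4 * abar ^ 2 * h := by
    have e : (b₂ * b₃) ^ 2 = b₂ ^ 2 * b₃ ^ 2 := by ring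
    rw [e, hb₂sq, hb₃sq, hS, hh, ha₂, ha₃]; ring
  have hprod : Real.sqrt ((S - h) ^ 2 - 4 * abar ^ 2 * h) = b₂ * b₃ := by
    rw [← hprodsq, Real.sqrt_sq (mul_nonneg hb₂nn hb₃nn)]
  have hShpos : 0 < S - h := by
    have := aux_sq (Real.sqrt σ) abar H habar0 habar1 hH hH'
    rw [hS, hh]; linarith [hts ▸ this]
  have part1 : Q = 2 * (S - h) + 2 * Real.sqrt ((S - h) ^ 2 - 4 * abar ^ 2 * h) := by
    rw [hprod, hQ]; linear_combination hsum
  have part2 : 0 < h → Q < 4 * (S - h) := by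
    intro hhp
    have h4 : 0 < 4 * abar ^ 2 * h := by positivity
    have hlt : b₂ * b₃ < S - h :=
      aux_lt _ _ (mul_nonneg hb₂nn hb₃nn) hShpos (by linarith [hprodsq])
    rw [part1, hprod]; linarith
  have hCnn : 0 ≤ C := hC ▸ sq_nonneg _
  have hQnn : 0 ≤ Q := hQ ▸ sq_nonneg _
  have part3 : 0 < h → 16 * C * h + Q * (Q + 4 * C + 4 * h) < 16 * S * (S + C) :=
    fun hhp => aux_main C S h Q hCnn hQnn hhp hShpos (part2 hhp)
  refine ⟨part1, part2, part3, fun hhp => ?_⟩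
  have e1 : (P₁₂ - P₁₃) ^ 2 + Q * (Q + 2 * P₁₂ + 2 * P₁₃)
      = 16 * C * h + Q * (Q + 4 * C + 4 * h) := by
    rw [hP₁₂, hP₁₃, ha₂, ha₃, hC, hh]; ring
  rw [e1]; exact part3 hhp
end

section
/- Let σ > 0 and a, b ∈ [0, √σ]. Then 1024σ²/27 - 16(σ - b²)(σ + a² + 2ab) = (32√σ/27)(3b - √σ)²(3b + 5√σ) + 16(σ - b²)(√σ - a)(√σ + a + 2b). Both summands on the right-hand side are nonnegative, hence 16(σ - b²)(σ + a² + 2ab) ≤ 1024σ²/27, with equality if and only if a = √σ and b = √σ/3. -/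
theorem optimality_certificate (σ a b : ℝ) (hσ : 0 < σ)
    (ha : a ∈ Set.Icc 0 (Real.sqrt σ)) (hb : b ∈ Set.Icc 0 (Real.sqrt σ)) :
    (1024 * σ ^ 2 / 27 - 16 * (σ - b ^ 2) * (σ + a ^ 2 + 2 * a * b)
      = (32 * Real.sqrt σ / 27) * (3 * b - Real.sqrt σ) ^ 2 * (3 * b + 5 * Real.sqrt σ)
        + 16 * (σ - b ^ 2) * (Real.sqrt σ - a) * (Real.sqrt σ + a + 2 * b)) ∧
    0 ≤ (32 * Real.sqrt σ / 27) * (3 * b - Real.sqrt σ) ^ 2 * (3 * b + 5 * Real.sqrt σ) ∧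
    0 ≤ 16 * (σ - b ^ 2) * (Real.sqrt σ - a) * (Real.sqrt σ + a + 2 * b) ∧
    16 * (σ - b ^ 2) * (σ + a ^ 2 + 2 * a * b) ≤ 1024 * σ ^ 2 / 27 ∧
    (16 * (σ - b ^ 2) * (σ + a ^ 2 + 2 * a * b) = 1024 * σ ^ 2 / 27 ↔
      a = Real.sqrt σ ∧ b = Real.sqrt σ / 3) := by
  obtain ⟨ha0, ha1⟩ := ha
  obtain ⟨hb0, hb1⟩ := hb
  set s := Real.sqrt σ with hs
  have hs0 : 0 < s := Real.sqrt_pos.mpr hσ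
  have hss : s ^ 2 = σ := Real.sq_sqrt hσ.le
  have hid : 1024 * σ ^ 2 / 27 - 16 * (σ - b ^ 2) * (σ + a ^ 2 + 2 * a * b)
      = (32 * s / 27) * (3 * b - s) ^ 2 * (3 * b + 5 * s)
        + 16 * (σ - b ^ 2) * (s - a) * (s + a + 2 * b) := by
    rw [← hss]; ring
  have hσb : 0 ≤ σ - b ^ 2 := by nlinarith
  have h1 : 0 ≤ (32 * s / 27) * (3 * b - s) ^ 2 * (3 * b + 5 * s) := by positivity
  have h2 : 0 ≤ 16 * (σ - b ^ 2) * (s - a) * (s + a + 2 * b) := by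
    have : 0 ≤ s - a := by linarith
    have : 0 ≤ s + a + 2 * b := by linarith
    positivity
  refine ⟨hid, h1, h2, by linarith, ?_⟩
  constructor
  · intro heq
    have hsum : (32 * s / 27) * (3 * b - s) ^ 2 * (3 * b + 5 * s)
        + 16 * (σ - b ^ 2) * (s - a) * (s + a + 2 * b) = 0 := by linarith
    have hz1 : (32 * s / 27) * (3 * b - s) ^ 2 * (3 * b + 5 * s) = 0 := by linarith
    have hz2 : 16 * (σ - b ^ 2) * (s - a) * (s + a + 2 * b) = 0 := by linarith
    have hb3 : b = s / 3 := by
      have hpos : 0 < (32 * s / 27) * (3 * b + 5 * s) := by positivity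
      have : (3 * b - s) ^ 2 = 0 := by
        by_contra h
        have h' : 0 < (3 * b - s) ^ 2 := lt_of_le_of_ne (sq_nonneg _) (Ne.symm h)
        nlinarith
      have := pow_eq_zero_iff (n := 2) (by norm_num) |>.mp this
      linarith
    refine ⟨?_, hb3⟩
    have hσb' : 0 < σ - b ^ 2 := by rw [hb3, ← hss]; nlinarith
    have hpos2 : 0 < 16 * (σ - b ^ 2) * (s + a + 2 * b) := by
      have : 0 < s + a + 2 * b := by linarith
      positivity
    by_contra h
    have h' : 0 < s - a := lt_of_le_of_ne (by linarith) (fun hh => h (by linarith))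
    nlinarith
  · rintro ⟨rfl, rfl⟩
    rw [← hss]; ring
end
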